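/- arXiv:2504.09009 — 3 statements merged into one kernel-verified Lean document; each statement's English description precedes it below -/
import Mathlib

section
/- Let G be the cumulative distribution function of a normal distribution N(μ, σ²) truncated to an interval [a, b] with a < b and σ > 0. Then for every fixed x ∈ (a, b), the map μ ↦ G(x) (as a function of the location parameter μ, with σ, a, b, x fixed) is continuous and strictly decreasing in μ. -/
open MeasureTheory ProbabilityTheory

/-- The standard normal cumulative distribution function `Φ`. -/
noncomputable def stdNormalCDF (x : ℝ) : ℝ :=
  ProbabilityTheory.cdf (gaussianReal 0 1) x

/-- CDF of the normal `N(μ, σ²)` truncated to the interval `[a, b]`. -/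
noncomputable def truncNormalCDF (μ σ a b x : ℝ) : ℝ :=
  (stdNormalCDF ((x - μ) / σ) - stdNormalCDF ((a - μ) / σ)) /
    (stdNormalCDF ((b - μ) / σ) - stdNormalCDF ((a - μ) / σ))

/-!
Since `G` depends on `μ` only through `μ / σ` (after scaling `a, b, x` by `σ`), it suffices to
treat `σ = 1`. There `φ' = -t φ` turns the boundary terms of `dG/dμ` into integrals of `t φ`, and
the derivative gets the sign of `E[T | a - μ ≤ T ≤ x - μ] - E[T | a - μ ≤ T ≤ b - μ]` for a
standard normal `T`. This is negative because a truncated mean strictly increases with the upper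
endpoint of the truncation interval.
-/

open Set

section TruncatedMean

variable {f : ℝ → ℝ}

lemma integral_id_mul_lt_mul_integral {p m : ℝ} (hpm : p < m)
    (hf : ContinuousOn f (Icc p m)) (hpos : ∀ t ∈ Icc p m, 0 < f t) :
    ∫ t in p..m, t * f t < m * ∫ t in p..m, f t := by
  rw [← intervalIntegral.integral_const_mul]
  refine intervalIntegral.integral_lt_integral_of_continuousOn_of_le_of_exists_lt hpm
    (continuousOn_id.mul hf) (continuousOn_const.mul hf) (fun t ht => ?_)
    ⟨p, left_mem_Icc.2 hpm.le, mul_lt_mul_of_pos_right hpm (hpos p (left_mem_Icc.2 hpm.le))⟩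
  exact mul_le_mul_of_nonneg_right ht.2 (hpos t (Ioc_subset_Icc_self ht)).le

lemma mul_integral_lt_integral_id_mul {m q : ℝ} (hmq : m < q)
    (hf : ContinuousOn f (Icc m q)) (hpos : ∀ t ∈ Icc m q, 0 < f t) :
    m * ∫ t in m..q, f t < ∫ t in m..q, t * f t := by
  rw [← intervalIntegral.integral_const_mul]
  refine intervalIntegral.integral_lt_integral_of_continuousOn_of_le_of_exists_lt hmq
    (continuousOn_const.mul hf) (continuousOn_id.mul hf) (fun t ht => ?_)
    ⟨q, right_mem_Icc.2 hmq.le, mul_lt_mul_of_pos_right hmq (hpos q (right_mem_Icc.2 hmq.le))⟩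
  exact mul_le_mul_of_nonneg_right ht.1.le (hpos t (Ioc_subset_Icc_self ht)).le

/-- Cross-multiplied form of: the `f`-weighted mean of `t` over `[p, m]` is smaller than over
`[p, q]`. -/
lemma integral_id_mul_mul_integral_lt {p m q : ℝ} (hpm : p < m) (hmq : m < q)
    (hf : ContinuousOn f (Icc p q)) (hpos : ∀ t ∈ Icc p q, 0 < f t) :
    (∫ t in p..m, t * f t) * (∫ t in p..q, f t) < (∫ t in p..m, f t) * ∫ t in p..q, t * f t := by
  have hf_pm := hf.mono (Icc_subset_Icc_right hmq.le)
  have hf_mq := hf.mono (Icc_subset_Icc_left hpm.le)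
  have hpos_pm := fun t ht => hpos t (Icc_subset_Icc_right hmq.le ht)
  have hpos_mq := fun t ht => hpos t (Icc_subset_Icc_left hpm.le ht)
  have hA : 0 < ∫ t in p..m, f t := intervalIntegral.intervalIntegral_pos_of_pos_on
    (hf_pm.intervalIntegrable_of_Icc hpm.le) (fun t ht => hpos_pm t (Ioo_subset_Icc_self ht)) hpm
  have hB : 0 < ∫ t in m..q, f t := intervalIntegral.intervalIntegral_pos_of_pos_on
    (hf_mq.intervalIntegrable_of_Icc hmq.le) (fun t ht => hpos_mq t (Ioo_subset_Icc_self ht)) hmq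
  have hS := integral_id_mul_lt_mul_integral hpm hf_pm hpos_pm
  have hT := mul_integral_lt_integral_id_mul hmq hf_mq hpos_mq
  rw [← intervalIntegral.integral_add_adjacent_intervals (hf_pm.intervalIntegrable_of_Icc hpm.le)
      (hf_mq.intervalIntegrable_of_Icc hmq.le),
    ← intervalIntegral.integral_add_adjacent_intervals (f := fun t => t * f t)
      ((continuousOn_id.mul hf_pm).intervalIntegrable_of_Icc hpm.le)
      ((continuousOn_id.mul hf_mq).intervalIntegrable_of_Icc hmq.le)]
  nlinarith [mul_lt_mul_of_pos_right hS hB, mul_lt_mul_of_pos_left hT hA]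

end TruncatedMean

lemma continuous_gaussianPDFReal (μ : ℝ) (v : NNReal) : Continuous (gaussianPDFReal μ v) := by
  rw [gaussianPDFReal_def]
  fun_prop

lemma hasDerivAt_gaussianPDFReal (μ : ℝ) (v : NNReal) (t : ℝ) :
    HasDerivAt (gaussianPDFReal μ v) (-(t - μ) / v * gaussianPDFReal μ v t) t := by
  have hexponent : HasDerivAt (fun s : ℝ => -(s - μ) ^ 2 / (2 * v)) (-(t - μ) / v) t := by
    refine HasDerivAt.congr_deriv (f := fun s : ℝ => -(s - μ) ^ 2 / (2 * v))
      ((((hasDerivAt_id t).sub_const μ).pow 2).neg.div_const (2 * (v : ℝ))) ?_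
    simp only [id_eq]
    ring
  refine HasDerivAt.congr_deriv (f := gaussianPDFReal μ v)
    (hexponent.exp.const_mul (√(2 * Real.pi * v))⁻¹) ?_
  rw [gaussianPDFReal]
  ring

local notation "φ" => gaussianPDFReal 0 1

lemma integral_id_mul_gaussianPDFReal (p q : ℝ) : ∫ t in p..q, t * φ t = φ p - φ q := by
  rw [intervalIntegral.integral_eq_sub_of_hasDerivAt (f := fun s => -φ s) (f' := fun t => t * φ t)
    (fun t _ => by simpa using (hasDerivAt_gaussianPDFReal 0 1 t).fun_neg)
    ((continuous_id.mul (continuous_gaussianPDFReal 0 1)).intervalIntegrable _ _)]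
  ring

lemma integral_gaussianPDFReal_pos {p q : ℝ} (hpq : p < q) : 0 < ∫ t in p..q, φ t :=
  intervalIntegral.intervalIntegral_pos_of_pos
    ((continuous_gaussianPDFReal 0 1).intervalIntegrable _ _)
    (gaussianPDFReal_pos 0 1 · one_ne_zero) hpq

lemma stdNormalCDF_sub_eq_integral {p q : ℝ} (hpq : p ≤ q) :
    stdNormalCDF q - stdNormalCDF p = ∫ t in p..q, φ t := by
  have h := (cdf (gaussianReal 0 1)).measure_Ioc p q
  rw [measure_cdf, gaussianReal_apply_eq_integral 0 one_ne_zero] at h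
  rw [intervalIntegral.integral_of_le hpq, stdNormalCDF, stdNormalCDF]
  exact (ENNReal.ofReal_eq_ofReal_iff (sub_nonneg.2 (monotone_cdf _ hpq))
    (setIntegral_nonneg measurableSet_Ioc fun t _ => gaussianPDFReal_nonneg 0 1 t)).1 h.symm

lemma hasDerivAt_stdNormalCDF (y : ℝ) : HasDerivAt stdNormalCDF (φ y) y := by
  have h := intervalIntegral.integral_hasDerivAt_right
    ((continuous_gaussianPDFReal 0 1).intervalIntegrable 0 y)
    ((continuous_gaussianPDFReal 0 1).stronglyMeasurableAtFilter _ _)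
    (continuous_gaussianPDFReal 0 1).continuousAt
  refine (h.const_add (stdNormalCDF 0)).congr_of_eventuallyEq
    (Filter.Eventually.of_forall fun u => ?_)
  dsimp only
  rcases le_total 0 u with hu | hu
  · rw [← stdNormalCDF_sub_eq_integral hu]; ring
  · rw [intervalIntegral.integral_symm, ← stdNormalCDF_sub_eq_integral hu]; ring

lemma truncNormalCDF_eq_standardized (μ σ a b x : ℝ) :
    truncNormalCDF μ σ a b x = truncNormalCDF (μ / σ) 1 (a / σ) (b / σ) (x / σ) := by
  simp only [truncNormalCDF, div_one, sub_div]

section Standardized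

variable {p m q : ℝ}

lemma hasDerivAt_truncNormalCDF_one (hpq : p < q) (ν : ℝ) :
    HasDerivAt (fun ν => truncNormalCDF ν 1 p q m)
      (((φ (p - ν) - φ (m - ν)) * (stdNormalCDF (q - ν) - stdNormalCDF (p - ν)) -
        (stdNormalCDF (m - ν) - stdNormalCDF (p - ν)) * (φ (p - ν) - φ (q - ν))) /
        (stdNormalCDF (q - ν) - stdNormalCDF (p - ν)) ^ 2) ν := by
  have hmass : stdNormalCDF (q - ν) - stdNormalCDF (p - ν) ≠ 0 := by
    rw [stdNormalCDF_sub_eq_integral (by linarith)]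
    exact (integral_gaussianPDFReal_pos (by linarith)).ne'
  have hΦ (c : ℝ) : HasDerivAt (fun ν => stdNormalCDF (c - ν)) (-φ (c - ν)) ν :=
    (hasDerivAt_stdNormalCDF _).comp_const_sub c ν
  simp only [truncNormalCDF, div_one]
  refine (((hΦ m).fun_sub (hΦ p)).fun_div ((hΦ q).fun_sub (hΦ p)) hmass).congr_deriv ?_
  ring

lemma continuous_truncNormalCDF_one (hpq : p < q) :
    Continuous fun ν => truncNormalCDF ν 1 p q m :=
  continuous_iff_continuousAt.2 fun ν => (hasDerivAt_truncNormalCDF_one hpq ν).continuousAt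

lemma strictAnti_truncNormalCDF_one (hpm : p < m) (hmq : m < q) :
    StrictAnti fun ν => truncNormalCDF ν 1 p q m := by
  refine strictAnti_of_hasDerivAt_neg (hasDerivAt_truncNormalCDF_one (hpm.trans hmq)) fun ν => ?_
  have hpm' : p - ν < m - ν := by linarith
  have hmq' : m - ν < q - ν := by linarith
  rw [stdNormalCDF_sub_eq_integral hpm'.le, stdNormalCDF_sub_eq_integral (hpm'.trans hmq').le,
    ← integral_id_mul_gaussianPDFReal, ← integral_id_mul_gaussianPDFReal]
  exact div_neg_of_neg_of_pos
    (sub_neg.2 (integral_id_mul_mul_integral_lt hpm' hmq'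
      (continuous_gaussianPDFReal 0 1).continuousOn
      fun t _ => gaussianPDFReal_pos 0 1 t one_ne_zero))
    (pow_pos (integral_gaussianPDFReal_pos (hpm'.trans hmq')) 2)

end Standardized

theorem stmt2_general (σ a b x : ℝ) (hσ : 0 < σ) (hx : x ∈ Set.Ioo a b) :
    Continuous (fun μ => truncNormalCDF μ σ a b x) ∧
      StrictAnti (fun μ => truncNormalCDF μ σ a b x) := by
  have hax : a / σ < x / σ := div_lt_div_of_pos_right hx.1 hσ
  have hxb : x / σ < b / σ := div_lt_div_of_pos_right hx.2 hσ
  simp only [truncNormalCDF_eq_standardized _ σ]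
  exact ⟨(continuous_truncNormalCDF_one (hax.trans hxb)).comp (continuous_id.div_const σ),
    (strictAnti_truncNormalCDF_one hax hxb).comp_strictMono (strictMono_id.div_const hσ)⟩

/-- For fixed `σ > 0`, `a < b` and `x ∈ (a, b)`, the truncated normal CDF
`μ ↦ G_{μ,σ}^{[a,b]}(x)` is continuous and strictly decreasing in the location
parameter `μ`. -/
theorem stmt2 (σ a b x : ℝ) (hσ : 0 < σ) (hab : a < b) (hx : x ∈ Set.Ioo a b) :
    Continuous (fun μ => truncNormalCDF μ σ a b x) ∧
      StrictAnti (fun μ => truncNormalCDF μ σ a b x) :=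
  stmt2_general σ a b x hσ hx
end

section
/- Let U_p, U_s, V_p, V_s be real random variables (depending on n) and Σ a positive-definite 2×2 matrix. Suppose (i) P(|U_p − V_p| ≥ C_p n^{1/6}) ≤ C_p'/n^{1/3} and P(|U_s − V_s| ≥ C_s n^{1/6}) ≤ C_s'/n^{1/3}, (ii) sup_{(x_p,x_s)} |P(U_p ≤ x_p n^{1/2}, U_s ≤ x_s n^{1/2}) − Φ_{0,Σ}(x_p, x_s)| ≤ C_u*/n^{1/2}, and (iii) Φ_{0,Σ} has bounded partial derivatives. Then there is a constant C_v* such that sup_{(x_p,x_s)} |P(V_p ≤ x_p n^{1/2}, V_s ≤ x_s n^{1/2}) − Φ_{0,Σ}(x_p, x_s)| ≤ C_v*/n^{1/3}. -/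
open MeasureTheory

/-- CDF of a centered bivariate normal distribution with covariance matrix
`[[s11, s12], [s12, s22]]`, written as a double integral of the density. -/
noncomputable def binormCDF (s11 s12 s22 xp xs : ℝ) : ℝ :=
  ∫ x in Set.Iic xp, ∫ y in Set.Iic xs,
    (1 / (2 * Real.pi * Real.sqrt (s11 * s22 - s12 ^ 2))) *
      Real.exp (-(s22 * x ^ 2 - 2 * s12 * x * y + s11 * y ^ 2) /
        (2 * (s11 * s22 - s12 ^ 2)))

/-!
Off the two events `a ≤ |U - V|` and `b ≤ |U' - V'|`, the joint CDF of `(V, V')` at a point is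
sandwiched between the joint CDF of `(U, U')` at the point shifted by `∓(a, b)`. With
`a, b ≍ n^{1/6}` these events have probability `O(n^{-1/3})`, the Berry–Esseen bound for `(U, U')`
costs `O(n^{-1/2})`, and on the normalized scale the shift is `n^{1/6} / n^{1/2} = n^{-1/3}`,
which the Lipschitz limit CDF turns into an error `O(n^{-1/3})`.
-/

section Transfer

variable {Ω : Type*} [MeasurableSpace Ω] (μ : Measure Ω) [IsFiniteMeasure μ]
  (U U' V V' : Ω → ℝ)

theorem measureReal_le_add_of_close (x y a b : ℝ) :
    μ.real {ω | V ω ≤ x ∧ V' ω ≤ y} ≤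
      μ.real {ω | U ω ≤ x + a ∧ U' ω ≤ y + b} + μ.real {ω | a ≤ |U ω - V ω|} +
        μ.real {ω | b ≤ |U' ω - V' ω|} := by
  have hsub : {ω | V ω ≤ x ∧ V' ω ≤ y} ⊆
      {ω | U ω ≤ x + a ∧ U' ω ≤ y + b} ∪ {ω | a ≤ |U ω - V ω|} ∪ {ω | b ≤ |U' ω - V' ω|} := by
    rintro ω ⟨hV, hV'⟩
    by_contra hnot
    simp only [Set.mem_union, Set.mem_ofPred_eq, not_or, not_and_or, not_le] at hnot
    obtain ⟨⟨hU | hU', ha⟩, hb⟩ := hnot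
    · linarith [le_abs_self (U ω - V ω)]
    · linarith [le_abs_self (U' ω - V' ω)]
  calc μ.real {ω | V ω ≤ x ∧ V' ω ≤ y}
      ≤ μ.real ({ω | U ω ≤ x + a ∧ U' ω ≤ y + b} ∪ {ω | a ≤ |U ω - V ω|} ∪
          {ω | b ≤ |U' ω - V' ω|}) := measureReal_mono hsub
    _ ≤ _ := (measureReal_union_le _ _).trans
          (add_le_add_left (measureReal_union_le _ _) _)

theorem LipschitzWith.abs_sub_shift_le {F : ℝ × ℝ → ℝ} {K : NNReal} (hF : LipschitzWith K F)
    (x y u v : ℝ) : |F (x + u, y + v) - F (x, y)| ≤ K * max |u| |v| := by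
  simpa [Prod.dist_eq, Real.dist_eq] using hF.dist_le_mul (x + u, y + v) (x, y)

theorem abs_measureReal_sub_le_of_close {F : ℝ × ℝ → ℝ} {K : NNReal} (hF : LipschitzWith K F)
    {s ε : ℝ} (hs : 0 < s)
    (hU : ∀ x y, |μ.real {ω | U ω ≤ x * s ∧ U' ω ≤ y * s} - F (x, y)| ≤ ε)
    (a b x y : ℝ) :
    |μ.real {ω | V ω ≤ x * s ∧ V' ω ≤ y * s} - F (x, y)| ≤
      ε + μ.real {ω | a ≤ |U ω - V ω|} + μ.real {ω | b ≤ |U' ω - V' ω|} +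
        K * (max |a| |b| / s) := by
  have hscale : ∀ c d : ℝ, (c + d / s) * s = c * s + d := fun c d => by field_simp
  have hshift : ∀ c d : ℝ, |c| = |a| → |d| = |b| →
      |F (x + c / s, y + d / s) - F (x, y)| ≤ K * (max |a| |b| / s) := by
    intro c d hc hd
    refine (hF.abs_sub_shift_le x y _ _).trans_eq ?_
    rw [abs_div, abs_div, abs_of_pos hs, hc, hd, max_div_div_right hs.le]
  have hupper : μ.real {ω | V ω ≤ x * s ∧ V' ω ≤ y * s} ≤
      F (x + a / s, y + b / s) + ε + μ.real {ω | a ≤ |U ω - V ω|} +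
        μ.real {ω | b ≤ |U' ω - V' ω|} := by
    have h := measureReal_le_add_of_close μ U U' V V' (x * s) (y * s) a b
    rw [← hscale, ← hscale] at h
    linarith [(abs_le.mp (hU (x + a / s) (y + b / s))).2]
  have hlower : F (x + -a / s, y + -b / s) - ε - μ.real {ω | a ≤ |U ω - V ω|} -
      μ.real {ω | b ≤ |U' ω - V' ω|} ≤ μ.real {ω | V ω ≤ x * s ∧ V' ω ≤ y * s} := by
    have h := measureReal_le_add_of_close μ V V' U U' (x * s + -a) (y * s + -b) a b
    simp only [neg_add_cancel_right, abs_sub_comm (V _), abs_sub_comm (V' _)] at h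
    rw [← hscale, ← hscale] at h
    linarith [(abs_le.mp (hU (x + -a / s) (y + -b / s))).1]
  have hFup := abs_le.mp (hshift a b rfl rfl)
  have hFlow := abs_le.mp (hshift (-a) (-b) (abs_neg a) (abs_neg b))
  rw [abs_le]
  constructor <;> linarith

end Transfer

theorem max_abs_mul_rpow_sixth_div_rpow_half {t a b : ℝ} (ht : 0 < t) (ha : 0 ≤ a) (hb : 0 ≤ b) :
    max |a * t ^ ((1 : ℝ) / 6)| |b * t ^ ((1 : ℝ) / 6)| / t ^ ((1 : ℝ) / 2) =
      max a b / t ^ ((1 : ℝ) / 3) := by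
  have hsixth : 0 < t ^ ((1 : ℝ) / 6) := by positivity
  have hhalf : t ^ ((1 : ℝ) / 2) = t ^ ((1 : ℝ) / 3) * t ^ ((1 : ℝ) / 6) := by
    rw [← Real.rpow_add ht]; norm_num
  rw [abs_of_nonneg (by positivity), abs_of_nonneg (by positivity),
    ← max_mul_of_nonneg _ _ hsixth.le, hhalf, mul_div_mul_right _ _ hsixth.ne']

theorem stmt5_general {Ω : Type*} [MeasurableSpace Ω] (P : Measure Ω) [IsProbabilityMeasure P]
    (Up Us Vp Vs : ℕ → Ω → ℝ)
    (s11 s12 s22 : ℝ)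
    (Cp Cp' Cs Cs' Cu K : ℝ)
    (hCp : 0 < Cp) (hCp' : 0 < Cp') (hCs : 0 < Cs) (hCs' : 0 < Cs') (hCu : 0 < Cu)
    (hclose_p : ∀ n : ℕ, 1 ≤ n →
      (P {ω | Cp * (n : ℝ) ^ ((1 : ℝ) / 6) ≤ |Up n ω - Vp n ω|}).toReal ≤
        Cp' / (n : ℝ) ^ ((1 : ℝ) / 3))
    (hclose_s : ∀ n : ℕ, 1 ≤ n →
      (P {ω | Cs * (n : ℝ) ^ ((1 : ℝ) / 6) ≤ |Us n ω - Vs n ω|}).toReal ≤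
        Cs' / (n : ℝ) ^ ((1 : ℝ) / 3))
    (hBE : ∀ n : ℕ, 1 ≤ n → ∀ xp xs : ℝ,
      |(P {ω | Up n ω ≤ xp * (n : ℝ) ^ ((1 : ℝ) / 2) ∧
          Us n ω ≤ xs * (n : ℝ) ^ ((1 : ℝ) / 2)}).toReal - binormCDF s11 s12 s22 xp xs| ≤
        Cu / (n : ℝ) ^ ((1 : ℝ) / 2))
    (hLip : 0 < K ∧ LipschitzWith (Real.toNNReal K)
      (fun p : ℝ × ℝ => binormCDF s11 s12 s22 p.1 p.2)) :
    ∃ Cv : ℝ, 0 < Cv ∧ ∀ n : ℕ, 1 ≤ n → ∀ xp xs : ℝ,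
      |(P {ω | Vp n ω ≤ xp * (n : ℝ) ^ ((1 : ℝ) / 2) ∧
          Vs n ω ≤ xs * (n : ℝ) ^ ((1 : ℝ) / 2)}).toReal - binormCDF s11 s12 s22 xp xs| ≤
        Cv / (n : ℝ) ^ ((1 : ℝ) / 3) := by
  obtain ⟨hK, hL⟩ := hLip
  refine ⟨Cu + Cp' + Cs' + K * max Cp Cs, by positivity, fun n hn xp xs => ?_⟩
  have hn0 : (0 : ℝ) < n := by exact_mod_cast hn
  have hCu_le : Cu / (n : ℝ) ^ ((1 : ℝ) / 2) ≤ Cu / (n : ℝ) ^ ((1 : ℝ) / 3) :=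
    div_le_div_of_nonneg_left hCu.le (by positivity)
      (Real.rpow_le_rpow_of_exponent_le (by exact_mod_cast hn) (by norm_num))
  calc _ ≤ Cu / (n : ℝ) ^ ((1 : ℝ) / 2) +
        (P {ω | Cp * (n : ℝ) ^ ((1 : ℝ) / 6) ≤ |Up n ω - Vp n ω|}).toReal +
        (P {ω | Cs * (n : ℝ) ^ ((1 : ℝ) / 6) ≤ |Us n ω - Vs n ω|}).toReal +
        K * (max |Cp * (n : ℝ) ^ ((1 : ℝ) / 6)| |Cs * (n : ℝ) ^ ((1 : ℝ) / 6)| /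
          (n : ℝ) ^ ((1 : ℝ) / 2)) := by
        simpa only [Real.coe_toNNReal K hK.le, measureReal_def] using
          abs_measureReal_sub_le_of_close P (Up n) (Us n) (Vp n) (Vs n) hL (by positivity)
            (hBE n hn) _ _ xp xs
    _ ≤ Cu / (n : ℝ) ^ ((1 : ℝ) / 3) + Cp' / (n : ℝ) ^ ((1 : ℝ) / 3) +
        Cs' / (n : ℝ) ^ ((1 : ℝ) / 3) + K * (max Cp Cs / (n : ℝ) ^ ((1 : ℝ) / 3)) := by
        rw [max_abs_mul_rpow_sixth_div_rpow_half hn0 hCp.le hCs.le]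
        gcongr ?_ + ?_ + ?_ + _
        exacts [hclose_p n hn, hclose_s n hn]
    _ = _ := by ring

/-- Lemma 4.1-type transfer of a Berry–Esseen bound: if `Vp, Vs` are close to
`Up, Us` with high probability and `(Up, Us)` satisfies a bivariate Berry–Esseen
bound of order `n^{-1/2}` toward `Φ_{0,Σ}` (which has bounded partial
derivatives, expressed via a Lipschitz bound), then `(Vp, Vs)` satisfies a
Berry–Esseen bound of order `n^{-1/3}`. -/
theorem stmt5 {Ω : Type*} [MeasurableSpace Ω] (P : Measure Ω) [IsProbabilityMeasure P]
    (Up Us Vp Vs : ℕ → Ω → ℝ)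
    (s11 s12 s22 : ℝ) (hpos : 0 < s11) (hdet : 0 < s11 * s22 - s12 ^ 2)
    (Cp Cp' Cs Cs' Cu K : ℝ)
    (hCp : 0 < Cp) (hCp' : 0 < Cp') (hCs : 0 < Cs) (hCs' : 0 < Cs') (hCu : 0 < Cu)
    (hclose_p : ∀ n : ℕ, 1 ≤ n →
      (P {ω | Cp * (n : ℝ) ^ ((1 : ℝ) / 6) ≤ |Up n ω - Vp n ω|}).toReal ≤
        Cp' / (n : ℝ) ^ ((1 : ℝ) / 3))
    (hclose_s : ∀ n : ℕ, 1 ≤ n →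
      (P {ω | Cs * (n : ℝ) ^ ((1 : ℝ) / 6) ≤ |Us n ω - Vs n ω|}).toReal ≤
        Cs' / (n : ℝ) ^ ((1 : ℝ) / 3))
    (hBE : ∀ n : ℕ, 1 ≤ n → ∀ xp xs : ℝ,
      |(P {ω | Up n ω ≤ xp * (n : ℝ) ^ ((1 : ℝ) / 2) ∧
          Us n ω ≤ xs * (n : ℝ) ^ ((1 : ℝ) / 2)}).toReal - binormCDF s11 s12 s22 xp xs| ≤
        Cu / (n : ℝ) ^ ((1 : ℝ) / 2))
    (hLip : 0 < K ∧ LipschitzWith (Real.toNNReal K)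
      (fun p : ℝ × ℝ => binormCDF s11 s12 s22 p.1 p.2)) :
    ∃ Cv : ℝ, 0 < Cv ∧ ∀ n : ℕ, 1 ≤ n → ∀ xp xs : ℝ,
      |(P {ω | Vp n ω ≤ xp * (n : ℝ) ^ ((1 : ℝ) / 2) ∧
          Vs n ω ≤ xs * (n : ℝ) ^ ((1 : ℝ) / 2)}).toReal - binormCDF s11 s12 s22 xp xs| ≤
        Cv / (n : ℝ) ^ ((1 : ℝ) / 3) :=
  stmt5_general P Up Us Vp Vs s11 s12 s22 Cp Cp' Cs Cs' Cu K hCp hCp' hCs hCs' hCu hclose_p hclose_s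
    hBE hLip
end

section
/- Let (X, Y) be bivariate standard normal with correlation ρ ∈ (0,1), and let c > 0. Then P(Y > z | X > c) is strictly increasing in ρ, and as ρ → 1⁻, P(Y > c | X > c) → 1. In particular, for any nominal level z_{1−α} and any β < 1 there exists ρ < 1 such that P(Y > z_{1−α} | X > z_{1−α}) > β. -/
open MeasureTheory ProbabilityTheory Filter

/-- The law of a bivariate standard normal pair with correlation `ρ`, obtained
as the image of two independent standard Gaussians. -/
noncomputable def stdBinorm (ρ : ℝ) : Measure (ℝ × ℝ) :=
  Measure.map (fun p : ℝ × ℝ => (p.1, ρ * p.1 + Real.sqrt (1 - ρ ^ 2) * p.2))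
    ((gaussianReal 0 1).prod (gaussianReal 0 1))

/-!
Realise `(X, Y)` as `(X, ρ X + √(1 - ρ²) Z)` with `X, Z` independent standard normals.
Conditioning on `X` gives `P(X > c, Y > z) = ∫_{x > c} Φ̄((z - ρ x) / √(1 - ρ²)) φ(x) dx`,
with `Φ̄` the standard normal tail.
The `ρ`-derivative of this integrand is `-∂ₓ φ₂(x, z; ρ)`, where `φ₂` is the bivariate normal
density, so `∂_ρ P(X > c, Y > z) = φ₂(c, z; ρ) > 0` (Plackett's identity); dividing by `P(X > c)`
gives strict monotonicity. As `ρ → 1⁻`, `(z - ρ x) / √(1 - ρ²) → -∞` for every `x > c ≥ z`, so by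
dominated convergence `P(X > c, Y > z) → P(X > c)`.
-/

open Real Set Topology

local notation "φ" => gaussianPDFReal 0 1

@[fun_prop]
lemma continuous_gaussianPDFReal_zero_one : Continuous φ := by
  rw [gaussianPDFReal_def]
  fun_prop

lemma gaussianPDFReal_zero_one_le_one (x : ℝ) : φ x ≤ 1 := by
  simp only [gaussianPDFReal, NNReal.coe_one, mul_one, sub_zero]
  refine mul_le_one₀ (inv_le_one_of_one_le₀ (one_le_sqrt.2 (by linarith [pi_gt_three])))
    (exp_nonneg _) (exp_le_one_iff.2 ?_)
  nlinarith [sq_nonneg x]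

lemma integrable_abs_add_mul_gaussianPDFReal_zero_one (y : ℝ) :
    Integrable fun x => (|x| + |y|) * φ x := by
  have habs : Integrable fun x => |x| * φ x := by
    refine ((integrable_mul_exp_neg_mul_sq (b := 2⁻¹) (by norm_num)).norm.const_mul
      (√(2 * π))⁻¹).congr (ae_of_all _ fun x => ?_)
    simp only [gaussianPDFReal, norm_mul, norm_eq_abs, abs_exp, NNReal.coe_one]
    ring_nf
  exact (habs.add ((integrable_gaussianPDFReal 0 1).const_mul |y|)).congr
    (ae_of_all _ fun x => (add_mul _ _ _).symm)

noncomputable def normalTail (t : ℝ) : ℝ := (gaussianReal 0 1).real (Ioi t)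

lemma normalTail_nonneg (t : ℝ) : 0 ≤ normalTail t := measureReal_nonneg

lemma normalTail_le_one (t : ℝ) : normalTail t ≤ 1 := measureReal_le_one

lemma normalTail_eq_integral (t : ℝ) : normalTail t = ∫ x in Ioi t, φ x := by
  rw [normalTail, measureReal_def, gaussianReal_apply_eq_integral 0 one_ne_zero,
    ENNReal.toReal_ofReal (setIntegral_nonneg measurableSet_Ioi fun x _ =>
      gaussianPDFReal_nonneg 0 1 x)]

lemma normalTail_pos (t : ℝ) : 0 < normalTail t := by
  rw [normalTail_eq_integral, setIntegral_pos_iff_support_of_nonneg_ae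
    (ae_of_all _ (gaussianPDFReal_nonneg 0 1)) (integrable_gaussianPDFReal 0 1).integrableOn]
  have : Function.support φ = univ :=
    eq_univ_of_forall fun x => (gaussianPDFReal_pos 0 1 x one_ne_zero).ne'
  simp [this]

lemma tendsto_normalTail_atBot : Tendsto normalTail atBot (𝓝 1) := by
  have h (t : ℝ) : normalTail t = 1 - cdf (gaussianReal 0 1) t := by
    rw [normalTail, cdf_eq_real, ← compl_Iic, probReal_compl_eq_one_sub measurableSet_Iic]
  simpa [funext h] using (tendsto_cdf_atBot (gaussianReal 0 1)).const_sub 1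

lemma hasDerivAt_normalTail (t : ℝ) : HasDerivAt normalTail (-φ t) t := by
  have hint (a : ℝ) : IntegrableOn φ (Ioi a) := (integrable_gaussianPDFReal 0 1).integrableOn
  have h : normalTail = fun t => (∫ x in Ioi 0, φ x) - ∫ x in 0..t, φ x := by
    funext t
    rw [normalTail_eq_integral, ← intervalIntegral.integral_interval_add_Ioi (hint 0) (hint t)]
    ring
  rw [h]
  exact (intervalIntegral.integral_hasDerivAt_right
    (integrable_gaussianPDFReal 0 1).intervalIntegrable
    (continuous_gaussianPDFReal_zero_one.stronglyMeasurableAtFilter _ _)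
    continuous_gaussianPDFReal_zero_one.continuousAt).const_sub _

@[fun_prop]
lemma continuous_normalTail : Continuous normalTail :=
  continuous_iff_continuousAt.2 fun t => (hasDerivAt_normalTail t).continuousAt

lemma norm_normalTail_mul_le (t x : ℝ) : ‖normalTail t * φ x‖ ≤ φ x := by
  rw [norm_of_nonneg (mul_nonneg (normalTail_nonneg t) (gaussianPDFReal_nonneg 0 1 x))]
  exact mul_le_of_le_one_left (gaussianPDFReal_nonneg 0 1 x) (normalTail_le_one t)

lemma one_sub_sq_pos_of_abs_lt_one {ρ : ℝ} (hρ : |ρ| < 1) : 0 < 1 - ρ ^ 2 :=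
  sub_pos.2 ((sq_lt_one_iff_abs_lt_one ρ).2 hρ)

noncomputable def jointTail (ρ c z : ℝ) : ℝ :=
  ∫ x in Ioi c, normalTail ((z - ρ * x) / √(1 - ρ ^ 2)) * φ x

lemma jointTail_nonneg (ρ c z : ℝ) : 0 ≤ jointTail ρ c z :=
  setIntegral_nonneg measurableSet_Ioi fun x _ =>
    mul_nonneg (normalTail_nonneg _) (gaussianPDFReal_nonneg 0 1 x)

lemma integrableOn_normalTail_mul_gaussianPDFReal (ρ c z : ℝ) :
    IntegrableOn (fun x => normalTail ((z - ρ * x) / √(1 - ρ ^ 2)) * φ x) (Ioi c) :=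
  (integrable_gaussianPDFReal 0 1).integrableOn.mono' (by fun_prop)
    (ae_of_all _ fun x => norm_normalTail_mul_le _ x)

lemma stdBinorm_fst_gt (ρ c : ℝ) :
    stdBinorm ρ {p | c < p.1} = ENNReal.ofReal (normalTail c) := by
  have hpre : (fun p : ℝ × ℝ => (p.1, ρ * p.1 + √(1 - ρ ^ 2) * p.2)) ⁻¹' {p | c < p.1}
      = Ioi c ×ˢ univ := by
    ext p
    simp
  rw [stdBinorm, Measure.map_apply (by fun_prop) (measurableSet_lt measurable_const measurable_fst),
    hpre, Measure.prod_prod, measure_univ, mul_one, normalTail, ofReal_measureReal]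

lemma stdBinorm_fst_gt_inter_snd_gt {ρ : ℝ} (hρ : |ρ| < 1) (c z : ℝ) :
    stdBinorm ρ ({p | c < p.1} ∩ {p | z < p.2}) = ENNReal.ofReal (jointTail ρ c z) := by
  set s := √(1 - ρ ^ 2)
  have hs : 0 < s := sqrt_pos.2 (one_sub_sq_pos_of_abs_lt_one hρ)
  set S := {p : ℝ × ℝ | z < ρ * p.1 + s * p.2}
  have hS : MeasurableSet S := measurableSet_lt measurable_const (by fun_prop)
  have hslice (x : ℝ) :
      gaussianReal 0 1 (Prod.mk x ⁻¹' S) = ENNReal.ofReal (normalTail ((z - ρ * x) / s)) := by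
    have : Prod.mk x ⁻¹' S = Ioi ((z - ρ * x) / s) := by
      ext y
      simp only [S, mem_preimage, mem_ofPred_eq, mem_Ioi, div_lt_iff₀ hs]
      constructor <;> intro h <;> linarith
    rw [this, normalTail, ofReal_measureReal]
  have hpre : (fun p : ℝ × ℝ => (p.1, ρ * p.1 + s * p.2)) ⁻¹' ({p | c < p.1} ∩ {p | z < p.2})
      = S ∩ Ioi c ×ˢ univ := by
    ext p
    simp [S, and_comm]
  rw [stdBinorm, Measure.map_apply (by fun_prop)
      ((measurableSet_lt measurable_const measurable_fst).inter
        (measurableSet_lt measurable_const measurable_snd)),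
    hpre, ← Measure.restrict_apply hS, ← Measure.prod_restrict, Measure.restrict_univ,
    Measure.prod_apply hS, lintegral_congr hslice, gaussianReal_of_var_ne_zero 0 one_ne_zero,
    restrict_withDensity measurableSet_Ioi, lintegral_withDensity_eq_lintegral_mul _
      (measurable_gaussianPDF 0 1) (by fun_prop), jointTail,
    ofReal_integral_eq_lintegral_ofReal (integrableOn_normalTail_mul_gaussianPDFReal ρ c z)
      (ae_of_all _ fun x => mul_nonneg (normalTail_nonneg _) (gaussianPDFReal_nonneg 0 1 x))]
  refine lintegral_congr fun x => ?_
  rw [Pi.mul_apply, gaussianPDF, ENNReal.ofReal_mul (normalTail_nonneg _), mul_comm]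

lemma stdBinorm_cond_snd_gt {ρ : ℝ} (hρ : |ρ| < 1) (c z : ℝ) :
    (((stdBinorm ρ)[|{p : ℝ × ℝ | c < p.1}]) {p : ℝ × ℝ | z < p.2}).toReal
      = jointTail ρ c z / normalTail c := by
  rw [cond_apply (measurableSet_lt measurable_const measurable_fst), stdBinorm_fst_gt,
    stdBinorm_fst_gt_inter_snd_gt hρ, ENNReal.toReal_mul, ENNReal.toReal_inv,
    ENNReal.toReal_ofReal (normalTail_nonneg c), ENNReal.toReal_ofReal
      (jointTail_nonneg ρ c z), inv_mul_eq_div]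

noncomputable def binormPDF (ρ x y : ℝ) : ℝ :=
  (2 * π * √(1 - ρ ^ 2))⁻¹ * rexp (-(x ^ 2 - 2 * ρ * x * y + y ^ 2) / (2 * (1 - ρ ^ 2)))

lemma binormPDF_pos {ρ : ℝ} (hρ : |ρ| < 1) (x y : ℝ) : 0 < binormPDF ρ x y := by
  have := sqrt_pos.2 (one_sub_sq_pos_of_abs_lt_one hρ)
  unfold binormPDF
  positivity

lemma gaussianPDFReal_mul_eq_binormPDF {ρ : ℝ} (hρ : |ρ| < 1) (x y : ℝ) :
    φ ((y - ρ * x) / √(1 - ρ ^ 2)) * φ x = √(1 - ρ ^ 2) * binormPDF ρ x y := by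
  have h1ρ := one_sub_sq_pos_of_abs_lt_one hρ
  have hs := sqrt_pos.2 h1ρ
  simp only [gaussianPDFReal, binormPDF, NNReal.coe_one, mul_one, sub_zero]
  have hexp : -((y - ρ * x) / √(1 - ρ ^ 2)) ^ 2 / 2 + -x ^ 2 / 2
      = -(x ^ 2 - 2 * ρ * x * y + y ^ 2) / (2 * (1 - ρ ^ 2)) := by
    rw [div_pow, sq_sqrt h1ρ.le]
    field_simp
    ring
  rw [mul_mul_mul_comm, ← exp_add, hexp, ← mul_inv, mul_self_sqrt (by positivity)]
  field_simp

lemma binormPDF_le {ρ : ℝ} (hρ : |ρ| < 1) (x y : ℝ) :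
    binormPDF ρ x y ≤ φ x / √(1 - ρ ^ 2) := by
  have hs := sqrt_pos.2 (one_sub_sq_pos_of_abs_lt_one hρ)
  rw [le_div_iff₀ hs, mul_comm, ← gaussianPDFReal_mul_eq_binormPDF hρ]
  exact mul_le_of_le_one_left (gaussianPDFReal_nonneg 0 1 x) (gaussianPDFReal_zero_one_le_one _)

lemma hasDerivAt_binormPDF_fst (ρ x y : ℝ) :
    HasDerivAt (fun x => binormPDF ρ x y)
      (-(binormPDF ρ x y * ((x - ρ * y) / (1 - ρ ^ 2)))) x := by
  have hq : HasDerivAt (fun x => -(x ^ 2 - 2 * ρ * x * y + y ^ 2) / (2 * (1 - ρ ^ 2)))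
      (-((x - ρ * y) / (1 - ρ ^ 2))) x := by
    have h := (((hasDerivAt_pow 2 x).sub (((hasDerivAt_id x).const_mul (2 * ρ)).mul_const y))
      |>.add_const (y ^ 2) |>.neg |>.div_const (2 * (1 - ρ ^ 2)))
    refine h.congr_deriv ?_
    rw [← neg_div, ← mul_div_mul_left (-(x - ρ * y)) _ (two_ne_zero' ℝ)]
    norm_num
    ring
  refine (((hasDerivAt_exp _).comp x hq).const_mul (2 * π * √(1 - ρ ^ 2))⁻¹).congr_deriv ?_
  simp only [binormPDF]
  ring

lemma tendsto_binormPDF_atTop {ρ : ℝ} (hρ : |ρ| < 1) (y : ℝ) :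
    Tendsto (fun x => binormPDF ρ x y) atTop (𝓝 0) := by
  have hq : Tendsto (fun x : ℝ => x ^ 2 - 2 * ρ * x * y + y ^ 2) atTop atTop := by
    refine (tendsto_atTop_add_const_right _ (y ^ 2) (tendsto_id.atTop_mul_atTop₀
      (tendsto_atTop_add_const_right _ (-(2 * ρ * y)) tendsto_id))).congr fun x => ?_
    simp only [id]
    ring
  have h := (tendsto_exp_atBot.comp ((tendsto_neg_atTop_atBot.comp hq).atBot_div_const
    (by linarith [one_sub_sq_pos_of_abs_lt_one hρ] : (0 : ℝ) < 2 * (1 - ρ ^ 2)))).const_mul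
      (2 * π * √(1 - ρ ^ 2))⁻¹
  simpa [binormPDF, Function.comp_def, neg_div] using h

lemma norm_binormPDF_mul_le {ρ b : ℝ} (hρb : |ρ| ≤ b) (hb : b < 1) (x y : ℝ) :
    ‖binormPDF ρ x y * ((x - ρ * y) / (1 - ρ ^ 2))‖
      ≤ (|x| + |y|) * φ x / (√(1 - b ^ 2) * (1 - b ^ 2)) := by
  have hρ : |ρ| < 1 := hρb.trans_lt hb
  have hρ2 := one_sub_sq_pos_of_abs_lt_one hρ
  have hb2 : 0 < 1 - b ^ 2 :=
    one_sub_sq_pos_of_abs_lt_one (by rwa [abs_of_nonneg ((abs_nonneg ρ).trans hρb)])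
  have hbρ : 1 - b ^ 2 ≤ 1 - ρ ^ 2 := by nlinarith [sq_abs ρ, abs_nonneg ρ]
  have hxy : |x - ρ * y| ≤ |x| + |y| :=
    calc |x - ρ * y| ≤ |x| + |ρ * y| := abs_sub _ _
      _ ≤ |x| + |y| := by
        rw [abs_mul]
        gcongr
        exact mul_le_of_le_one_left (abs_nonneg y) hρ.le
  have hpdf : binormPDF ρ x y ≤ φ x / √(1 - b ^ 2) :=
    (binormPDF_le hρ x y).trans (div_le_div_of_nonneg_left (gaussianPDFReal_nonneg 0 1 x)
      (sqrt_pos.2 hb2) (sqrt_le_sqrt hbρ))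
  rw [norm_mul, norm_div, norm_of_nonneg (binormPDF_pos hρ x y).le, norm_eq_abs,
    norm_of_nonneg hρ2.le]
  calc binormPDF ρ x y * (|x - ρ * y| / (1 - ρ ^ 2))
      ≤ φ x / √(1 - b ^ 2) * ((|x| + |y|) / (1 - b ^ 2)) :=
        mul_le_mul hpdf (by gcongr) (by positivity)
          (div_nonneg (gaussianPDFReal_nonneg 0 1 x) (sqrt_nonneg _))
    _ = (|x| + |y|) * φ x / (√(1 - b ^ 2) * (1 - b ^ 2)) := by
        rw [div_mul_div_comm, mul_comm (φ x)]

lemma integrable_binormPDF_mul {ρ : ℝ} (hρ : |ρ| < 1) (y : ℝ) :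
    Integrable fun x => binormPDF ρ x y * ((x - ρ * y) / (1 - ρ ^ 2)) :=
  ((integrable_abs_add_mul_gaussianPDFReal_zero_one y).div_const _).mono'
    (by unfold binormPDF; fun_prop) (ae_of_all _ (norm_binormPDF_mul_le le_rfl hρ · y))

lemma integral_Ioi_binormPDF_mul {ρ : ℝ} (hρ : |ρ| < 1) (c y : ℝ) :
    ∫ x in Ioi c, binormPDF ρ x y * ((x - ρ * y) / (1 - ρ ^ 2)) = binormPDF ρ c y := by
  simpa using integral_Ioi_of_hasDerivAt_of_tendsto'
    (fun x _ => (hasDerivAt_binormPDF_fst ρ x y).neg.congr_deriv (neg_neg _))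
    (integrable_binormPDF_mul hρ y).integrableOn (tendsto_binormPDF_atTop hρ y).neg

lemma hasDerivAt_normalTail_mul_gaussianPDFReal {ρ : ℝ} (hρ : |ρ| < 1) (x z : ℝ) :
    HasDerivAt (fun r => normalTail ((z - r * x) / √(1 - r ^ 2)) * φ x)
      (binormPDF ρ x z * ((x - ρ * z) / (1 - ρ ^ 2))) ρ := by
  have h1ρ := one_sub_sq_pos_of_abs_lt_one hρ
  have hs : 0 < √(1 - ρ ^ 2) := sqrt_pos.2 h1ρ
  have hss : √(1 - ρ ^ 2) ^ 2 = 1 - ρ ^ 2 := sq_sqrt h1ρ.le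
  have hsqrt : HasDerivAt (fun r => √(1 - r ^ 2)) (-ρ / √(1 - ρ ^ 2)) ρ := by
    refine (((hasDerivAt_pow 2 ρ).const_sub 1).sqrt h1ρ.ne').congr_deriv ?_
    field_simp
    ring
  have hu : HasDerivAt (fun r => (z - r * x) / √(1 - r ^ 2))
      ((ρ * z - x) / √(1 - ρ ^ 2) ^ 3) ρ := by
    refine ((((hasDerivAt_id' ρ).mul_const x).const_sub z).div hsqrt hs.ne').congr_deriv ?_
    field_simp
    linear_combination (-x) * hss
  refine (((hasDerivAt_normalTail _).comp ρ hu).mul_const (φ x)).congr_deriv ?_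
  have hprod := gaussianPDFReal_mul_eq_binormPDF hρ x z
  set s := √(1 - ρ ^ 2)
  calc -φ ((z - ρ * x) / s) * ((ρ * z - x) / s ^ 3) * φ x
      = φ ((z - ρ * x) / s) * φ x * ((x - ρ * z) / s ^ 3) := by ring
    _ = binormPDF ρ x z * ((x - ρ * z) / (1 - ρ ^ 2)) := by
      rw [hprod, ← hss]
      field_simp

lemma hasDerivAt_jointTail {ρ : ℝ} (hρ : |ρ| < 1) (c z : ℝ) :
    HasDerivAt (fun r => jointTail r c z) (binormPDF ρ c z) ρ := by
  obtain ⟨b, hρb, hb⟩ := exists_between hρ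
  have hnhds : Ioo (-b) b ∈ 𝓝 ρ := Ioo_mem_nhds (by linarith [neg_abs_le ρ])
    ((le_abs_self ρ).trans_lt hρb)
  rw [← integral_Ioi_binormPDF_mul hρ c z]
  refine (hasDerivAt_integral_of_dominated_loc_of_deriv_le (μ := volume.restrict (Ioi c))
    (F := fun r x => normalTail ((z - r * x) / √(1 - r ^ 2)) * φ x) hnhds
    (Eventually.of_forall fun r => (by fun_prop : Continuous _).aestronglyMeasurable)
    (integrableOn_normalTail_mul_gaussianPDFReal ρ c z)
    (by unfold binormPDF; fun_prop : Continuous _).aestronglyMeasurable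
    (ae_of_all _ fun x r hr => norm_binormPDF_mul_le (abs_lt.2 hr).le hb x z)
    ((integrable_abs_add_mul_gaussianPDFReal_zero_one z).div_const _).integrableOn
    (ae_of_all _ fun x r hr => hasDerivAt_normalTail_mul_gaussianPDFReal
      ((abs_lt.2 hr).trans_le hb.le) x z)).2

lemma strictMonoOn_jointTail (c z : ℝ) :
    StrictMonoOn (fun ρ => jointTail ρ c z) (Ioo (-1) 1) := by
  have hderiv (ρ : ℝ) (hρ : ρ ∈ Ioo (-1) 1) := hasDerivAt_jointTail (abs_lt.2 hρ) c z
  refine strictMonoOn_of_hasDerivWithinAt_pos (f' := fun ρ => binormPDF ρ c z) (convex_Ioo (-1) 1)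
    (fun ρ hρ => (hderiv ρ hρ).continuousAt.continuousWithinAt) (fun ρ hρ => ?_) (fun ρ hρ => ?_)
  all_goals rw [interior_Ioo] at hρ
  · exact (hderiv ρ hρ).hasDerivWithinAt
  · exact binormPDF_pos (abs_lt.2 hρ) c z

lemma tendsto_sqrt_one_sub_sq_nhdsLT_one :
    Tendsto (fun ρ : ℝ => √(1 - ρ ^ 2)) (𝓝[<] 1) (𝓝[>] 0) := by
  refine tendsto_nhdsWithin_iff.2 ⟨?_, ?_⟩
  · simpa using ((by fun_prop : Continuous fun ρ : ℝ => √(1 - ρ ^ 2)).tendsto 1).mono_left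
      nhdsWithin_le_nhds
  · filter_upwards [Ioo_mem_nhdsLT (show (-1 : ℝ) < 1 by norm_num)] with ρ hρ
    exact sqrt_pos.2 (one_sub_sq_pos_of_abs_lt_one (abs_lt.2 hρ))

lemma tendsto_jointTail_nhdsLT_one {c z : ℝ} (hzc : z ≤ c) :
    Tendsto (fun ρ => jointTail ρ c z) (𝓝[<] 1) (𝓝 (normalTail c)) := by
  rw [normalTail_eq_integral]
  refine tendsto_integral_filter_of_dominated_convergence φ
    (Eventually.of_forall fun ρ => (by fun_prop : Continuous _).aestronglyMeasurable)
    (Eventually.of_forall fun ρ => ae_of_all _ fun x => norm_normalTail_mul_le _ x)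
    (integrable_gaussianPDFReal 0 1).integrableOn ?_
  filter_upwards [ae_restrict_mem measurableSet_Ioi] with x hx
  have hzx : z - x < 0 := by linarith [mem_Ioi.1 hx]
  have hnum : Tendsto (fun ρ : ℝ => z - ρ * x) (𝓝[<] 1) (𝓝 (z - x)) := by
    simpa using ((by fun_prop : Continuous fun ρ : ℝ => z - ρ * x).tendsto 1).mono_left
      nhdsWithin_le_nhds
  have hu : Tendsto (fun ρ => (z - ρ * x) / √(1 - ρ ^ 2)) (𝓝[<] 1) atBot := by
    simpa [div_eq_mul_inv] using
      hnum.neg_mul_atTop hzx tendsto_sqrt_one_sub_sq_nhdsLT_one.inv_tendsto_nhdsGT_zero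
  simpa using (tendsto_normalTail_atBot.comp hu).mul_const (φ x)

lemma tendsto_stdBinorm_cond_snd_gt_nhdsLT_one {c z : ℝ} (hzc : z ≤ c) :
    Tendsto (fun ρ => (((stdBinorm ρ)[|{p : ℝ × ℝ | c < p.1}]) {p : ℝ × ℝ | z < p.2}).toReal)
      (𝓝[<] 1) (𝓝 1) := by
  have h := (tendsto_jointTail_nhdsLT_one hzc).div_const (normalTail c)
  rw [div_self (normalTail_pos c).ne'] at h
  refine h.congr' ?_
  filter_upwards [Ioo_mem_nhdsLT (show (-1 : ℝ) < 1 by norm_num)] with ρ hρ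
  exact (stdBinorm_cond_snd_gt (abs_lt.2 hρ) c z).symm

theorem stmt9_general (c z : ℝ) :
    StrictMonoOn
        (fun ρ => (((stdBinorm ρ)[|{p : ℝ × ℝ | c < p.1}]) {p : ℝ × ℝ | z < p.2}).toReal)
        (Set.Ioo (0 : ℝ) 1) ∧
      Tendsto
        (fun ρ => (((stdBinorm ρ)[|{p : ℝ × ℝ | c < p.1}]) {p : ℝ × ℝ | c < p.2}).toReal)
        (nhdsWithin 1 (Set.Iio 1)) (nhds 1) ∧
      (∀ z' β : ℝ, β < 1 → ∃ ρ ∈ Set.Ioo (0 : ℝ) 1,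
        β < (((stdBinorm ρ)[|{p : ℝ × ℝ | z' < p.1}]) {p : ℝ × ℝ | z' < p.2}).toReal) := by
  refine ⟨fun a ha b hb hab => ?_, tendsto_stdBinorm_cond_snd_gt_nhdsLT_one le_rfl,
    fun z' β hβ => ?_⟩
  · have hsub : Ioo (0 : ℝ) 1 ⊆ Ioo (-1) 1 := Ioo_subset_Ioo_left (by norm_num)
    simp only [stdBinorm_cond_snd_gt (abs_lt.2 (hsub ha)),
      stdBinorm_cond_snd_gt (abs_lt.2 (hsub hb))]
    exact div_lt_div_of_pos_right (strictMonoOn_jointTail c z (hsub ha) (hsub hb) hab)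
      (normalTail_pos c)
  · obtain ⟨ρ, hβρ, hρ⟩ := (((tendsto_stdBinorm_cond_snd_gt_nhdsLT_one le_rfl).eventually
      (eventually_gt_nhds hβ)).and (Ioo_mem_nhdsLT one_pos)).exists
    exact ⟨ρ, hρ, hβρ⟩

/-- For a bivariate standard normal pair `(X, Y)` with correlation `ρ ∈ (0,1)`
and `c > 0`, `P(Y > z | X > c)` is strictly increasing in `ρ`; as `ρ → 1⁻`,
`P(Y > c | X > c) → 1`; and for any threshold `z₁₋α` and `β < 1` there is
`ρ < 1` with `P(Y > z₁₋α | X > z₁₋α) > β`. -/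
theorem stmt9 (c z : ℝ) (hc : 0 < c) :
    StrictMonoOn
        (fun ρ => (((stdBinorm ρ)[|{p : ℝ × ℝ | c < p.1}]) {p : ℝ × ℝ | z < p.2}).toReal)
        (Set.Ioo (0 : ℝ) 1) ∧
      Tendsto
        (fun ρ => (((stdBinorm ρ)[|{p : ℝ × ℝ | c < p.1}]) {p : ℝ × ℝ | c < p.2}).toReal)
        (nhdsWithin 1 (Set.Iio 1)) (nhds 1) ∧
      (∀ z' β : ℝ, β < 1 → ∃ ρ ∈ Set.Ioo (0 : ℝ) 1,
        β < (((stdBinorm ρ)[|{p : ℝ × ℝ | z' < p.1}]) {p : ℝ × ℝ | z' < p.2}).toReal) :=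
  stmt9_general c z
end
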